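/- arXiv:0811.2477 — 2 statements merged into one kernel-verified Lean document; each statement's English description precedes it below -/
import Mathlib

section
/- There are infinitely many triangular numbers that are palindromic in base 2. -/
/-!
For `x = 2 ^ (k + 1) + 1`, whose binary expansion `1 0…0 1` is a palindrome with `k + 2` digits,
the triangular number `tri (2 ^ (k + 2) + 1) = x * (2 ^ (k + 2) + 1) = x + 2 ^ (k + 2) * x` is
written in binary as the expansion of `x` repeated twice, hence is again a palindrome.
-/

/-- The n-th triangular number. -/
def tri (n : ℕ) : ℕ := n * (n + 1) / 2

theorem List.Palindrome.append_self {α : Type*} {l : List α} (h : l.Palindrome) :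
    (l ++ l).Palindrome :=
  .of_reverse_eq <| by rw [List.reverse_append, h.reverse_eq]

theorem Nat.digits_base_pow_succ_add_one {b : ℕ} (hb : 1 < b) (k : ℕ) :
    Nat.digits b (b ^ (k + 1) + 1) = 1 :: List.replicate k 0 ++ [1] := by
  have h := Nat.digits_append_zeroes_append_digits (k := k) (m := 1) (n := 1) hb one_pos
  rw [Nat.digits_of_lt b 1 one_ne_zero hb] at h
  simpa [add_comm] using h.symm

theorem tri_two_pow_succ_add_one (k : ℕ) :
    tri (2 ^ (k + 1) + 1) = (2 ^ k + 1) + 2 ^ (k + 1) * (2 ^ k + 1) := by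
  have hsucc : 2 ^ (k + 1) + 1 + 1 = 2 * (2 ^ k + 1) := by ring
  rw [tri, hsucc, Nat.mul_left_comm, Nat.mul_div_cancel_left _ two_pos]
  ring

theorem palindrome_digits_two_tri_two_pow_add_one (k : ℕ) :
    (Nat.digits 2 (tri (2 ^ (k + 2) + 1))).Palindrome := by
  have hx := Nat.digits_base_pow_succ_add_one one_lt_two k
  have hlen : (Nat.digits 2 (2 ^ (k + 1) + 1)).length = k + 2 := by rw [hx]; simp
  rw [tri_two_pow_succ_add_one, ← hlen, ← Nat.digits_append_digits two_pos]
  exact List.Palindrome.append_self (hx ▸ .of_reverse_eq (by simp))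

theorem infinitely_many_triangular_palindromes_base_two :
    {m : ℕ | (∃ n, m = tri n) ∧ (Nat.digits 2 m).reverse = Nat.digits 2 m}.Infinite := by
  refine Set.infinite_of_forall_exists_gt fun a => ⟨tri (2 ^ (a + 2) + 1),
    ⟨⟨_, rfl⟩, (palindrome_digits_two_tri_two_pow_add_one a).reverse_eq⟩, ?_⟩
  calc a < 2 ^ (a + 2) := a.lt_two_pow_self.trans (Nat.pow_lt_pow_right one_lt_two (by omega))
    _ ≤ tri (2 ^ (a + 2) + 1) := by
      rw [tri_two_pow_succ_add_one]
      exact le_add_left (Nat.le_mul_of_pos_right _ (by positivity))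
end

section
/- For every natural number k ≥ 1, with n = (5^k - 1)/2, the triangular number t_n equals (25^k - 1)/8 = 3·(1 + 25 + ... + 25^{k-1}), whose base-5 representation consists of alternating digits 3 and 0 (palindromic in base 5). -/
theorem eight_mul_tri_add_one (n : ℕ) : 8 * tri n + 1 = (2 * n + 1) ^ 2 := by
  have h : tri n * 2 = n * (n + 1) := Nat.div_mul_cancel (Nat.even_mul_succ_self n).two_dvd
  nlinarith [h]

theorem List.reverse_map_range_of_symm {α : Type*} (f : ℕ → α) (n : ℕ)
    (hf : ∀ i < n, f (n - 1 - i) = f i) :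
    ((List.range n).map f).reverse = (List.range n).map f := by
  rw [← List.map_reverse, List.range_eq_range', List.reverse_range', ← List.range_eq_range',
    List.map_map]
  exact List.map_congr_left fun i hi => by simpa using hf i (List.mem_range.mp hi)

def alternatingList (a n : ℕ) : List ℕ :=
  (List.range n).map fun i => if i % 2 = 0 then a else 0

namespace alternatingList

variable (a : ℕ)

theorem succ (n : ℕ) :
    alternatingList a (n + 1) = alternatingList a n ++ [if n % 2 = 0 then a else 0] := by
  simp [alternatingList, List.range_succ]

theorem odd_succ (k : ℕ) :
    alternatingList a (2 * (k + 1) + 1) = alternatingList a (2 * k + 1) ++ [0, a] := by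
  rw [show 2 * (k + 1) + 1 = 2 * k + 1 + 1 + 1 by ring, succ, succ]
  simp [show (2 * k + 1) % 2 = 1 by omega, show (2 * k + 1 + 1) % 2 = 0 by omega]

theorem reverse_odd (k : ℕ) :
    (alternatingList a (2 * k + 1)).reverse = alternatingList a (2 * k + 1) :=
  List.reverse_map_range_of_symm _ _ fun i hi => by
    simp only [show (2 * k + 1 - 1 - i) % 2 = i % 2 by omega]

theorem ofDigits_odd (b k : ℕ) :
    Nat.ofDigits b (alternatingList a (2 * k + 1)) =
      a * ∑ i ∈ Finset.range (k + 1), (b ^ 2) ^ i := by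
  induction k with
  | zero => simp [alternatingList]
  | succ k ih =>
    rw [odd_succ, Nat.ofDigits_append, ih, Finset.sum_range_succ _ (k + 1)]
    simp only [alternatingList, List.length_map, List.length_range, Nat.ofDigits_cons,
      Nat.ofDigits_nil]
    ring

theorem digits_odd {b : ℕ} (hb : 1 < b) (ha : 0 < a) (hab : a < b) (k : ℕ) :
    Nat.digits b (a * ∑ i ∈ Finset.range (k + 1), (b ^ 2) ^ i) =
      alternatingList a (2 * k + 1) := by
  rw [← ofDigits_odd]
  refine Nat.digits_ofDigits b hb _ (fun d hd => ?_) fun _ => ?_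
  · simp only [alternatingList, List.mem_map] at hd
    obtain ⟨i, -, rfl⟩ := hd
    split_ifs <;> omega
  · simp only [succ, List.getLast_append_singleton, Nat.mul_mod_right, if_true]
    exact ha.ne'

end alternatingList

theorem triangular_palindromic_base_five_general (k : ℕ) :
    tri ((5 ^ k - 1) / 2) = (25 ^ k - 1) / 8 ∧
    tri ((5 ^ k - 1) / 2) = 3 * ∑ i ∈ Finset.range k, 25 ^ i ∧
    Nat.digits 5 (tri ((5 ^ k - 1) / 2)) =
      (List.range (2 * k - 1)).map (fun i => if i % 2 = 0 then 3 else 0) ∧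
    (Nat.digits 5 (tri ((5 ^ k - 1) / 2))).reverse =
      Nat.digits 5 (tri ((5 ^ k - 1) / 2)) := by
  set S := ∑ i ∈ Finset.range k, 25 ^ i
  have hodd : 2 * ((5 ^ k - 1) / 2) + 1 = 5 ^ k := by
    obtain ⟨j, hj⟩ : Odd (5 ^ k) := Odd.pow (by decide)
    omega
  have hgeom : S * 24 + 1 = 25 ^ k := geom_sum_mul_add 24 k
  have htri : tri ((5 ^ k - 1) / 2) = 3 * S := by
    have h25 : (5 ^ k) ^ 2 = 25 ^ k := by rw [← pow_mul, mul_comm, pow_mul]; norm_num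
    have := eight_mul_tri_add_one ((5 ^ k - 1) / 2)
    rw [hodd, h25] at this
    omega
  refine ⟨by omega, htri, ?_⟩
  obtain _ | k := k
  · simp [tri]
  rw [htri, show 2 * (k + 1) - 1 = 2 * k + 1 by omega]
  have hdigits : Nat.digits 5 (3 * S) = alternatingList 3 (2 * k + 1) :=
    alternatingList.digits_odd 3 (by norm_num) (by norm_num) (by norm_num) k
  exact ⟨hdigits, hdigits ▸ alternatingList.reverse_odd 3 k⟩

theorem triangular_palindromic_base_five (k : ℕ) (hk : 1 ≤ k) :
    tri ((5 ^ k - 1) / 2) = (25 ^ k - 1) / 8 ∧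
    tri ((5 ^ k - 1) / 2) = 3 * ∑ i ∈ Finset.range k, 25 ^ i ∧
    Nat.digits 5 (tri ((5 ^ k - 1) / 2)) =
      (List.range (2 * k - 1)).map (fun i => if i % 2 = 0 then 3 else 0) ∧
    (Nat.digits 5 (tri ((5 ^ k - 1) / 2))).reverse =
      Nat.digits 5 (tri ((5 ^ k - 1) / 2)) :=
  triangular_palindromic_base_five_general k
end
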